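/- Let K be a field of characteristic zero and let A be the commutative quotient ring K[β,γ]/(γ³ − β², βγ). Then A is a K-vector space of dimension 5, with basis the images of 1, β, γ, γ², γ³. -/

import Mathlib

noncomputable section
open MvPolynomial

/-- The ideal `(γ³ − β², βγ)` in `K[β,γ]` (`β = X 0`, `γ = X 1`). -/
def conIdeal (K : Type*) [Field K] : Ideal (MvPolynomial (Fin 2) K) :=
  Ideal.span {(X 1)^3 - (X 0)^2, X 0 * X 1}

/-! Write `b, c` for the images of `β, γ`. From `b² = c³` and `bc = 0` one gets `c⁴ = cb² = 0`, so
the span of `1, b, c, c², c³` is stable under multiplication by the generators `b, c`, hence is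
the whole algebra. For independence, the five coefficient functionals at `1, β, γ, γ²` and
`coeff_γ³ + coeff_β²` kill every multiple of `γ³ − β²` and of `βγ`, and are dual to
`1, β, γ, γ², γ³`. -/

theorem Submodule.eq_top_of_one_mem_of_mul_mem {R A : Type*} [CommSemiring R] [Semiring A]
    [Algebra R A] {s : Set A} (hs : Algebra.adjoin R s = ⊤) (S : Submodule R A) (h1 : 1 ∈ S)
    (hmul : ∀ x ∈ S, ∀ y ∈ s, x * y ∈ S) : S = ⊤ := by
  have hright : ∀ a : A, ∀ x ∈ S, x * a ∈ S := by
    intro a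
    induction (hs ▸ Algebra.mem_top : a ∈ Algebra.adjoin R s) using Algebra.adjoin_induction with
    | mem y hy => exact fun x hx => hmul x hx y hy
    | algebraMap r =>
      exact fun x hx => by rw [← Algebra.commutes, ← Algebra.smul_def]; exact S.smul_mem r hx
    | add a b _ _ ha hb => exact fun x hx => by rw [mul_add]; exact add_mem (ha x hx) (hb x hx)
    | mul a b _ _ ha hb => exact fun x hx => by rw [← mul_assoc]; exact hb _ (ha x hx)
  exact eq_top_iff.mpr fun a _ => one_mul a ▸ hright a 1 h1

theorem Ideal.Quotient.linearIndependent_mk_of_dual {K R ι : Type*} [Field K] [CommRing R]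
    [Algebra K R] [Fintype ι] [DecidableEq ι] {I : Ideal R} {v : ι → R} (L : R →ₗ[K] ι → K)
    (hI : ∀ p ∈ I, L p = 0) (hv : ∀ i, L (v i) = Pi.single i 1) :
    LinearIndependent K (Ideal.Quotient.mk I ∘ v) := by
  refine Fintype.linearIndependent_iff.mpr fun g hg => ?_
  have hmem : ∑ i, g i • v i ∈ I := by
    rw [← Ideal.Quotient.eq_zero_iff_mem, ← Ideal.Quotient.mkₐ_eq_mk K, map_sum]
    simpa only [map_smul, Function.comp_apply, Ideal.Quotient.mkₐ_eq_mk] using hg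
  have hcoords := hI _ hmem
  simp only [map_sum, map_smul, hv] at hcoords
  intro i
  simpa [Pi.single_apply] using congrFun hcoords i

section Relations

variable {K A : Type*} [Field K] [CommRing A] [Algebra K A]

def lauferFamily (b c : A) : Fin 5 → A := ![1, b, c, c ^ 2, c ^ 3]

theorem lauferFamily_map {B : Type*} [CommRing B] (f : A →+* B) (b c : A) :
    lauferFamily (f b) (f c) = f ∘ lauferFamily b c := by
  ext i; fin_cases i <;> simp [lauferFamily]

theorem mul_mem_span_lauferFamily {b c : A} (hb : b ^ 2 = c ^ 3) (hbc : b * c = 0) {x : A}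
    (hx : x ∈ Submodule.span K (Set.range (lauferFamily b c))) :
    x * b ∈ Submodule.span K (Set.range (lauferFamily b c)) ∧
      x * c ∈ Submodule.span K (Set.range (lauferFamily b c)) := by
  set S := Submodule.span K (Set.range (lauferFamily b c))
  have hc4 : c ^ 4 = 0 := by
    calc c ^ 4 = b ^ 2 * c := by rw [hb]; ring
      _ = 0 := by rw [sq, mul_assoc, hbc, mul_zero]
  have mem : ∀ i, lauferFamily b c i ∈ S := fun i => Submodule.subset_span ⟨i, rfl⟩
  have hb_mem : b ∈ S := mem 1
  have hc_mem : c ∈ S := mem 2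
  have hc2_mem : c ^ 2 ∈ S := mem 3
  have hc3_mem : c ^ 3 ∈ S := mem 4
  have hcb : c * b = 0 := by rw [mul_comm, hbc]
  have hc2b : c ^ 2 * b = 0 := by rw [sq, mul_assoc, hcb, mul_zero]
  have hc3b : c ^ 3 * b = 0 := by rw [pow_succ, mul_assoc, hcb, mul_zero]
  have hmul : ∀ y, S ≤ S.comap (LinearMap.mulRight K y) ↔
      ∀ i, lauferFamily b c i * y ∈ S := fun y =>
    Submodule.span_le.trans Set.range_subset_iff
  refine ⟨(hmul b).mpr ?_ hx, (hmul c).mpr ?_ hx⟩ <;> intro i <;> fin_cases i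
  all_goals simp [lauferFamily, ← sq, ← pow_succ, *]

theorem span_lauferFamily_eq_top {b c : A} (hb : b ^ 2 = c ^ 3) (hbc : b * c = 0)
    (hgen : Algebra.adjoin K {b, c} = ⊤) :
    Submodule.span K (Set.range (lauferFamily b c)) = ⊤ := by
  refine Submodule.eq_top_of_one_mem_of_mul_mem hgen _ (Submodule.subset_span ⟨0, rfl⟩) ?_
  rintro x hx y (rfl | rfl | _)
  exacts [(mul_mem_span_lauferFamily hb hbc hx).1, (mul_mem_span_lauferFamily hb hbc hx).2]

end Relations

theorem Ideal.Quotient.adjoin_mk_X_eq_top {R : Type*} [CommRing R]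
    (I : Ideal (MvPolynomial (Fin 2) R)) :
    Algebra.adjoin R {Ideal.Quotient.mk I (X 0), Ideal.Quotient.mk I (X 1)} = ⊤ := by
  have himage : {Ideal.Quotient.mk I (X 0), Ideal.Quotient.mk I (X 1)} =
      Ideal.Quotient.mkₐ R I '' Set.range X := by
    rw [← Set.range_comp]; ext; simp [Fin.exists_fin_two, eq_comm]
  rw [himage, Algebra.adjoin_image, adjoin_range_X, Algebra.map_top, AlgHom.range_eq_top]
  exact Ideal.Quotient.mkₐ_surjective R I

section Coordinates

open Finsupp

variable (K : Type*) [Field K]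

def lauferCoords : MvPolynomial (Fin 2) K →ₗ[K] Fin 5 → K :=
  LinearMap.pi ![lcoeff K 0, lcoeff K (single 0 1), lcoeff K (single 1 1), lcoeff K (single 1 2),
    lcoeff K (single 1 3) + lcoeff K (single 0 2)]

variable {K}

theorem lauferCoords_lauferFamily (i : Fin 5) :
    lauferCoords K (lauferFamily (X 0) (X 1) i) = Pi.single i 1 := by
  ext j
  fin_cases i <;> fin_cases j <;>
    simp [lauferCoords, lauferFamily, coeff_X, coeff_X_pow, coeff_one, single_eq_single_iff,
      eq_comm (a := (0 : Fin 2 →₀ ℕ))]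

theorem lauferCoords_eq_zero_of_mem {p : MvPolynomial (Fin 2) K} (hp : p ∈ conIdeal K) :
    lauferCoords K p = 0 := by
  obtain ⟨u, v, rfl⟩ := Ideal.mem_span_pair.mp hp
  have h3 : (X 1 : MvPolynomial (Fin 2) K)^3 = monomial (single 1 3) 1 := X_pow_eq_monomial ..
  have h2 : (X 0 : MvPolynomial (Fin 2) K)^2 = monomial (single 0 2) 1 := X_pow_eq_monomial ..
  have hxy : (X 0 : MvPolynomial (Fin 2) K) * X 1 = monomial (single 0 1 + single 1 1) 1 := by
    rw [X, X, monomial_mul, one_mul]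
  ext j
  fin_cases j <;> simp [lauferCoords, mul_sub, h3, h2, hxy, coeff_mul_monomial', le_def,
    Fin.forall_fin_two, single_apply]

end Coordinates

theorem dim_abelianized_contraction_laufer (K : Type*) [Field K] :
    Module.finrank K (MvPolynomial (Fin 2) K ⧸ conIdeal K) = 5 ∧
    ∃ B : Module.Basis (Fin 5) K (MvPolynomial (Fin 2) K ⧸ conIdeal K),
      B 0 = Ideal.Quotient.mk (conIdeal K) 1 ∧
      B 1 = Ideal.Quotient.mk (conIdeal K) (X 0) ∧
      B 2 = Ideal.Quotient.mk (conIdeal K) (X 1) ∧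
      B 3 = Ideal.Quotient.mk (conIdeal K) ((X 1)^2) ∧
      B 4 = Ideal.Quotient.mk (conIdeal K) ((X 1)^3) := by
  set b := Ideal.Quotient.mk (conIdeal K) (X 0)
  set c := Ideal.Quotient.mk (conIdeal K) (X 1)
  have hb : b ^ 2 = c ^ 3 := by
    rw [← map_pow, ← map_pow, eq_comm, Ideal.Quotient.eq]
    exact Ideal.subset_span (by simp)
  have hbc : b * c = 0 := by
    rw [← map_mul, Ideal.Quotient.eq_zero_iff_mem]
    exact Ideal.subset_span (by simp)
  have hli : LinearIndependent K (lauferFamily b c) := by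
    rw [lauferFamily_map]
    exact Ideal.Quotient.linearIndependent_mk_of_dual (lauferCoords K)
      (fun _ => lauferCoords_eq_zero_of_mem) lauferCoords_lauferFamily
  let B := Module.Basis.mk hli
    (span_lauferFamily_eq_top hb hbc (Ideal.Quotient.adjoin_mk_X_eq_top _)).ge
  refine ⟨by rw [Module.finrank_eq_card_basis B, Fintype.card_fin], B, ?_, ?_, ?_, ?_, ?_⟩ <;>
    simp [B, lauferFamily, b, c]

end
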